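/- For S a set of odd integers greater than 1, the algebra 𝔪₀^S — with basis e_i (i ≥ 1) and z_r (r ∈ S), and brackets [e_1, e_i] = e_{i+1} for i ≥ 2, [e_l, e_{r-l+2}] = (-1)^{l+1} z_r for 2 ≤ l ≤ (r+1)/2 and r ∈ S, all z_r central — satisfies the Jacobi identity and hence is a Lie algebra. -/

import Mathlib

open Finsupp in
/-- Structure constants of 𝔪₀^S for a set `S` of odd integers `> 1`. Basis vectors are
indexed by `ℕ ⊕ ℕ`: `Sum.inl i` is `e i` (`i ≥ 1`; index 0 unused) and `Sum.inr r` is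
`z r` (`r ∈ S`; other indices unused). Relations: `[e 1, e i] = e (i+1)` for `i ≥ 2`,
`[e l, e (r-l+2)] = (-1)^(l+1) z r` for `2 ≤ l ≤ (r+1)/2`, `r ∈ S` (for `l, j ≥ 2` with
`r = l + j - 2 ∈ S` odd, the condition `l ≤ (r+1)/2` is equivalent to `l < j`), the `z r`
are central, all other brackets of basis vectors are zero, extended antisymmetrically. -/
noncomputable def m0Sc (K : Type*) [Field K] (S : Set ℕ) :
    ℕ ⊕ ℕ → ℕ ⊕ ℕ → ((ℕ ⊕ ℕ) →₀ K) := by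
  classical
  exact fun a b =>
    match a, b with
    | .inl i, .inl j =>
        if i = 1 ∧ 2 ≤ j then single (.inl (j + 1)) 1
        else if j = 1 ∧ 2 ≤ i then -single (.inl (i + 1)) 1
        else if 2 ≤ i ∧ 2 ≤ j ∧ i < j ∧ i + j - 2 ∈ S then
          (-1 : K) ^ (i + 1) • single (.inr (i + j - 2)) 1
        else if 2 ≤ i ∧ 2 ≤ j ∧ j < i ∧ i + j - 2 ∈ S then
          -((-1 : K) ^ (j + 1) • single (.inr (i + j - 2)) 1)
        else 0
    | _, _ => 0

/-- The bilinear extension of the bracket given by structure constants `c`. -/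
noncomputable def brkt {ι : Type*} (K : Type*) [Field K] (c : ι → ι → (ι →₀ K))
    (x y : ι →₀ K) : ι →₀ K :=
  x.sum fun i a => y.sum fun j b => (a * b) • c i j

/-! Both identities are bilinear resp. trilinear, so it suffices to check them on basis vectors.
The `z r` are central, and `[e i, e j]` is central unless `i` or `j` is `1`, so up to rotation the
only nontrivial Jacobi triple is `(e 1, e j, e k)` with `j, k ≥ 2`, where the identity reads
`[e (j+1), e k] = [e (k+1), e j]`. Since `j + k - 1` is odd, `j` and `k` have the same parity, and
both sides equal `(-1)^j z (j+k-1)` when `j + k - 1 ∈ S` (and vanish otherwise). -/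

open Finsupp

section StructureConstants

variable {ι R : Type*} [CommRing R]

noncomputable def Finsupp.bilinOfStructureConstants (c : ι → ι → (ι →₀ R)) :
    (ι →₀ R) →ₗ[R] (ι →₀ R) →ₗ[R] (ι →₀ R) :=
  linearCombination R fun i => linearCombination R (c i)

@[simp]
theorem Finsupp.bilinOfStructureConstants_single_single (c : ι → ι → (ι →₀ R)) (a b : ι) :
    bilinOfStructureConstants c (single a 1) (single b 1) = c a b := by
  simp [bilinOfStructureConstants]

theorem brkt_eq_bilinOfStructureConstants {K : Type*} [Field K] (c : ι → ι → (ι →₀ K))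
    (x y : ι →₀ K) : brkt K c x y = bilinOfStructureConstants c x y := by
  simp [brkt, bilinOfStructureConstants, linearCombination_apply, Finsupp.sum, Finset.smul_sum,
    smul_smul]

theorem Finsupp.bilin_antisymm_of_single {M : Type*} [AddCommGroup M] [Module R M]
    {B : (ι →₀ R) →ₗ[R] (ι →₀ R) →ₗ[R] M}
    (h : ∀ a b, B (single a 1) (single b 1) = -B (single b 1) (single a 1)) (x y : ι →₀ R) :
    B x y = -B y x := by
  have : B = -B.flip := Finsupp.lhom_ext' fun a => LinearMap.ext_ring <|
    Finsupp.lhom_ext' fun b => LinearMap.ext_ring <| by simpa using h a b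
  simpa using LinearMap.congr_fun₂ this x y

theorem Finsupp.bilin_jacobi_of_single {B : (ι →₀ R) →ₗ[R] (ι →₀ R) →ₗ[R] (ι →₀ R)}
    (h : ∀ a b d, B (B (single a 1) (single b 1)) (single d 1) +
      B (B (single b 1) (single d 1)) (single a 1) +
      B (B (single d 1) (single a 1)) (single b 1) = 0) (x y z : ι →₀ R) :
    B (B x y) z + B (B y z) x + B (B z x) y = 0 := by
  set J : (ι →₀ R) → (ι →₀ R) → (ι →₀ R) → (ι →₀ R) :=
    fun x y z => B (B x y) z + B (B y z) x + B (B z x) y with hJ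
  have J_rotate : ∀ x y z, J x y z = J y z x := fun x y z => by simp only [hJ]; abel
  have J_eq_zero_of_single : ∀ y z, (∀ a, J (single a 1) y z = 0) → ∀ x, J x y z = 0 := by
    intro y z h x
    -- `J · y z` is this linear map
    have : B.flip z ∘ₗ B.flip y + B (B y z) + B.flip y ∘ₗ B z = 0 :=
      Finsupp.lhom_ext' fun a => LinearMap.ext_ring <| by simpa [hJ] using h a
    simpa [hJ] using LinearMap.congr_fun this x
  refine J_eq_zero_of_single y z (fun a => ?_) x
  rw [J_rotate]
  refine J_eq_zero_of_single z _ (fun b => ?_) y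
  rw [J_rotate]
  exact J_eq_zero_of_single _ _ (fun d => by rw [J_rotate]; exact h _ _ _) z

end StructureConstants

section m0S

variable {K : Type*} [Field K] {S : Set ℕ}

@[simp]
theorem m0Sc_inr_left (r : ℕ) : m0Sc K S (.inr r) = 0 :=
  funext fun b => by cases b <;> rfl

@[simp]
theorem m0Sc_inr_right (a : ℕ ⊕ ℕ) (r : ℕ) : m0Sc K S a (.inr r) = 0 := by
  cases a <;> rfl

@[simp]
theorem m0Sc_inl_zero_right (i : ℕ) : m0Sc K S (.inl i) (.inl 0) = 0 := by
  simp [m0Sc]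

theorem m0Sc_antisymm (a b : ℕ ⊕ ℕ) : m0Sc K S a b = -m0Sc K S b a := by
  rcases a with i | r <;> rcases b with j | r'
  · simp only [m0Sc, add_comm j i]
    split_ifs <;> grind
  all_goals simp

theorem m0Sc_succ_left_comm (hS : ∀ r ∈ S, Odd r) {j k : ℕ} (hj : 2 ≤ j) (hk : 2 ≤ k) :
    m0Sc K S (.inl (j + 1)) (.inl k) = m0Sc K S (.inl (k + 1)) (.inl j) := by
  simp only [m0Sc]
  rw [show j + 1 + k - 2 = j + k - 1 by omega, show k + 1 + j - 2 = j + k - 1 by omega]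
  by_cases hmem : j + k - 1 ∈ S
  · -- `j + k - 1` is odd, so `j < k` forces `j + 1 < k`, and symmetrically
    obtain ⟨m, hm⟩ := hS _ hmem
    obtain rfl | hne := eq_or_ne j k
    · rfl
    simp only [hmem, and_true]
    split_ifs <;> first | (exfalso; omega) | simp [pow_succ]
  · simp only [hmem, and_false, if_false]
    split_ifs <;> first | rfl | (exfalso; omega)

@[simp]
theorem bilin_m0Sc_inr_left (r : ℕ) (a : K) (w : ℕ ⊕ ℕ →₀ K) :
    bilinOfStructureConstants (m0Sc K S) (single (.inr r) a) w = 0 := by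
  simp [bilinOfStructureConstants]

@[simp]
theorem bilin_m0Sc_inr_right (v : ℕ ⊕ ℕ →₀ K) (r : ℕ) (a : K) :
    bilinOfStructureConstants (m0Sc K S) v (single (.inr r) a) = 0 := by
  simp [bilinOfStructureConstants, linearCombination_apply]

theorem bilin_m0Sc_inl_inl_single (i j : ℕ) (d : ℕ ⊕ ℕ) :
    bilinOfStructureConstants (m0Sc K S) (m0Sc K S (.inl i) (.inl j)) (single d 1) =
      if i = 1 ∧ 2 ≤ j then m0Sc K S (.inl (j + 1)) d
      else if j = 1 ∧ 2 ≤ i then -m0Sc K S (.inl (i + 1)) d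
      else 0 := by
  conv_lhs => arg 1; arg 2; simp only [m0Sc]
  split_ifs <;> simp

theorem m0Sc_jacobi_one (hS : ∀ r ∈ S, Odd r) (j k : ℕ) :
    bilinOfStructureConstants (m0Sc K S) (m0Sc K S (.inl 1) (.inl j)) (single (.inl k) 1) +
      bilinOfStructureConstants (m0Sc K S) (m0Sc K S (.inl j) (.inl k)) (single (.inl 1) 1) +
      bilinOfStructureConstants (m0Sc K S) (m0Sc K S (.inl k) (.inl 1)) (single (.inl j) 1) = 0 := by
  simp only [bilin_m0Sc_inl_inl_single]
  rcases (show j = 0 ∨ j = 1 ∨ 2 ≤ j by omega) with rfl | rfl | hj <;>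
    rcases (show k = 0 ∨ k = 1 ∨ 2 ≤ k by omega) with rfl | rfl | hk
  case inr.inr.inr.inr =>
    simp [hj, hk, show j ≠ 1 by omega, show k ≠ 1 by omega, m0Sc_succ_left_comm hS hj hk]
  all_goals simp_all

theorem m0Sc_jacobi (hS : ∀ r ∈ S, Odd r) (a b d : ℕ ⊕ ℕ) :
    bilinOfStructureConstants (m0Sc K S) (m0Sc K S a b) (single d 1) +
      bilinOfStructureConstants (m0Sc K S) (m0Sc K S b d) (single a 1) +
      bilinOfStructureConstants (m0Sc K S) (m0Sc K S d a) (single b 1) = 0 := by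
  rcases a with i | _ <;> rcases b with j | _ <;> rcases d with k | _
  case inl.inl.inl =>
    by_cases hi : i = 1
    · subst hi; exact m0Sc_jacobi_one hS j k
    by_cases hj : j = 1
    · subst hj; rw [add_rotate]; exact m0Sc_jacobi_one hS k i
    by_cases hk : k = 1
    · subst hk; rw [← add_rotate]; exact m0Sc_jacobi_one hS i j
    simp [bilin_m0Sc_inl_inl_single, hi, hj, hk]
  all_goals simp

end m0S

/-- For `S` a set of odd integers greater than 1, the bracket of 𝔪₀^S is antisymmetric
and satisfies the Jacobi identity, hence 𝔪₀^S is a Lie algebra. -/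
theorem m0S_is_lie_algebra (K : Type*) [Field K] (S : Set ℕ)
    (hS : ∀ r ∈ S, Odd r ∧ 3 ≤ r) :
    (∀ x y : (ℕ ⊕ ℕ) →₀ K, brkt K (m0Sc K S) x y = -brkt K (m0Sc K S) y x) ∧
    (∀ x y z : (ℕ ⊕ ℕ) →₀ K,
      brkt K (m0Sc K S) (brkt K (m0Sc K S) x y) z +
        brkt K (m0Sc K S) (brkt K (m0Sc K S) y z) x +
        brkt K (m0Sc K S) (brkt K (m0Sc K S) z x) y = 0) := by
  simp only [brkt_eq_bilinOfStructureConstants]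
  exact ⟨bilin_antisymm_of_single fun a b => by simpa using m0Sc_antisymm a b,
    bilin_jacobi_of_single fun a b d => by simpa using m0Sc_jacobi (fun r hr => (hS r hr).1) a b d⟩
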